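/- arXiv:2508.11006 — 3 statements merged into one kernel-verified Lean document; each statement's English description precedes it below -/
import Mathlib

section
/- Let C ≥ 4 and ε > 0 with n√C ≤ 2^{C^ε}. With w₀ = 2^{C^ε}, the sum over j from 0 to C^ε - log₂ n - (log₂ C)/2 of the quantity 2 n² (2^j / w₀)² / (1 - n 2^j / w₀) is at most 8/C. -/
open Finset

/-! Writing `x_j = n 2^j / w₀`, the `j`-th term is `2 x_j² / (1 - x_j)`. On the range of `j`
we have `x_j ≤ x_N ≤ 1/√C ≤ 1/2`, so each term is at most `4 x_j² ≤ 4 x_N x_j`, and since the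
`x_j` double at each step, `∑ x_j ≤ 2 x_N`. Hence the sum is at most `8 x_N² ≤ 8 / C`. -/

lemma two_mul_sq_div_one_sub_le {x : ℝ} (hx : x ≤ 1 / 2) :
    2 * x ^ 2 / (1 - x) ≤ 4 * x ^ 2 := by
  rw [div_le_iff₀ (by linarith)]
  nlinarith [sq_nonneg x]

lemma sum_range_succ_mul_two_pow_le {a : ℝ} (ha : 0 ≤ a) (N : ℕ) :
    ∑ j ∈ range (N + 1), a * 2 ^ j ≤ 2 * (a * 2 ^ N) := by
  induction N with
  | zero => simp only [zero_add, sum_range_one, pow_zero]; linarith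
  | succ N ih => rw [sum_range_succ, pow_succ]; linarith

lemma sum_range_succ_collision_le {a : ℝ} (ha : 0 ≤ a) {N : ℕ} (hN : a * 2 ^ N ≤ 1 / 2) :
    ∑ j ∈ range (N + 1), 2 * (a * 2 ^ j) ^ 2 / (1 - a * 2 ^ j) ≤ 8 * (a * 2 ^ N) ^ 2 := by
  have hmono : ∀ j ∈ range (N + 1), a * 2 ^ j ≤ a * 2 ^ N := fun j hj =>
    mul_le_mul_of_nonneg_left
      (pow_le_pow_right₀ one_le_two (Nat.lt_succ_iff.mp (mem_range.mp hj))) ha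
  calc ∑ j ∈ range (N + 1), 2 * (a * 2 ^ j) ^ 2 / (1 - a * 2 ^ j)
      ≤ ∑ j ∈ range (N + 1), 4 * (a * 2 ^ N) * (a * 2 ^ j) := by
        refine sum_le_sum fun j hj => ?_
        calc 2 * (a * 2 ^ j) ^ 2 / (1 - a * 2 ^ j) ≤ 4 * (a * 2 ^ j) ^ 2 :=
              two_mul_sq_div_one_sub_le ((hmono j hj).trans hN)
          _ ≤ 4 * (a * 2 ^ N) * (a * 2 ^ j) := by
              rw [sq, ← mul_assoc]
              exact mul_le_mul_of_nonneg_right (by linarith [hmono j hj]) (by positivity)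
    _ = 4 * (a * 2 ^ N) * ∑ j ∈ range (N + 1), a * 2 ^ j := (mul_sum ..).symm
    _ ≤ 4 * (a * 2 ^ N) * (2 * (a * 2 ^ N)) := by
        gcongr
        exact sum_range_succ_mul_two_pow_le ha N
    _ = 8 * (a * 2 ^ N) ^ 2 := by ring

lemma two_rpow_sub_logb_sub_half_logb {n C : ℝ} (hn : 0 < n) (hC : 0 < C) (s : ℝ) :
    (2 : ℝ) ^ (s - Real.logb 2 n - Real.logb 2 C / 2) = 2 ^ s / (n * Real.sqrt C) := by
  rw [Real.rpow_sub two_pos, Real.rpow_sub two_pos, Real.rpow_logb two_pos (by norm_num) hn,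
    div_eq_mul_one_div (Real.logb 2 C), Real.rpow_mul zero_le_two,
    Real.rpow_logb two_pos (by norm_num) hC, ← Real.sqrt_eq_rpow, div_div]

theorem halving_phase_collision_sum_general (C ε n : ℝ) (hC : 4 ≤ C)
    (hn : 1 ≤ n) (N : ℕ)
    (hN : (N : ℝ) ≤ C ^ ε - Real.logb 2 n - Real.logb 2 C / 2) :
    ∑ j ∈ Finset.range (N + 1),
      2 * n ^ 2 * ((2 : ℝ) ^ j / (2 : ℝ) ^ (C ^ ε)) ^ 2 /
        (1 - n * (2 : ℝ) ^ j / (2 : ℝ) ^ (C ^ ε)) ≤ 8 / C := by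
  set w : ℝ := (2 : ℝ) ^ (C ^ ε)
  have hC0 : 0 < C := by linarith
  have hw : 0 < w := Real.rpow_pos_of_pos two_pos _
  have hsqrtC : 2 ≤ Real.sqrt C := Real.le_sqrt_of_sq_le (by linarith)
  have hkey : n / w * 2 ^ N ≤ (Real.sqrt C)⁻¹ := by
    have h := Real.rpow_le_rpow_of_exponent_le one_le_two hN
    rw [Real.rpow_natCast, two_rpow_sub_logb_sub_half_logb (by linarith) hC0,
      le_div_iff₀ (by positivity)] at h
    rw [le_inv_comm₀ (by positivity) (by positivity), div_mul_eq_mul_div, inv_div,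
      le_div_iff₀ (by positivity)]
    linarith
  have hhalf : n / w * 2 ^ N ≤ 1 / 2 :=
    hkey.trans (by rw [one_div]; exact inv_anti₀ two_pos hsqrtC)
  calc ∑ j ∈ Finset.range (N + 1), 2 * n ^ 2 * ((2 : ℝ) ^ j / w) ^ 2 / (1 - n * 2 ^ j / w)
      = ∑ j ∈ Finset.range (N + 1), 2 * (n / w * 2 ^ j) ^ 2 / (1 - n / w * 2 ^ j) :=
        sum_congr rfl fun j _ => by ring
    _ ≤ 8 * (n / w * 2 ^ N) ^ 2 := sum_range_succ_collision_le (by positivity) hhalf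
    _ ≤ 8 * (Real.sqrt C)⁻¹ ^ 2 := by gcongr
    _ = 8 / C := by rw [inv_pow, Real.sq_sqrt hC0.le, div_eq_mul_inv]

/-- The sum of per-slot collision probabilities accumulated during the halving phase:
with `w₀ = 2^(C^ε)` and `n √C ≤ w₀`, for any natural `N` with
`N ≤ C^ε - log₂ n - (log₂ C)/2`, we have
`∑_{j=0}^{N} 2 n² (2^j / w₀)² / (1 - n 2^j / w₀) ≤ 8 / C`. -/
theorem halving_phase_collision_sum (C ε n : ℝ) (hC : 4 ≤ C) (hε : 0 < ε)
    (hn : 1 ≤ n) (hgood : n * Real.sqrt C ≤ (2 : ℝ) ^ (C ^ ε)) (N : ℕ)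
    (hN : (N : ℝ) ≤ C ^ ε - Real.logb 2 n - Real.logb 2 C / 2) :
    ∑ j ∈ Finset.range (N + 1),
      2 * n ^ 2 * ((2 : ℝ) ^ j / (2 : ℝ) ^ (C ^ ε)) ^ 2 /
        (1 - n * (2 : ℝ) ^ j / (2 : ℝ) ^ (C ^ ε)) ≤ 8 / C :=
  halving_phase_collision_sum_general C ε n hC hn N hN
end

section
/- Consider a fair algorithm running for λ slots with per-slot sending probabilities p(1), …, p(λ) ∈ [0, 1/2], executed by n packets independently. If the total contention TC = n·∑_{i=1}^λ p(i) < 2, then the probability that no slot ever contains exactly one sender (i.e., the algorithm never succeeds) is at least e^{-4} (assuming a single fixed packet fails with probability at least ∏(1 - p(i)) and packets' failures are treated independently so all-fail probability is at least (e^{-2·TC/n})^n). -/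
open Finset Real

-- `e^{2x} ≥ 1 + 2x`, and `(1 + 2x)(1 - x) = 1 + x(1 - 2x) ≥ 1` on `[0, 1/2]`.
theorem Real.exp_neg_two_mul_le_one_sub {x : ℝ} (hx : x ∈ Set.Icc (0 : ℝ) (1 / 2)) :
    exp (-(2 * x)) ≤ 1 - x := by
  obtain ⟨hx0, hx1⟩ := hx
  have hpos : 0 < 1 + 2 * x := by linarith
  calc exp (-(2 * x)) = (exp (2 * x))⁻¹ := exp_neg _
    _ ≤ (1 + 2 * x)⁻¹ := inv_anti₀ hpos (by linarith [add_one_le_exp (2 * x)])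
    _ ≤ 1 - x := by rw [inv_le_iff_one_le_mul₀ hpos]; nlinarith

theorem Real.exp_neg_two_mul_sum_le_prod_one_sub {ι : Type*} {s : Finset ι} {p : ι → ℝ}
    (hp : ∀ i ∈ s, p i ∈ Set.Icc (0 : ℝ) (1 / 2)) :
    exp (-(2 * ∑ i ∈ s, p i)) ≤ ∏ i ∈ s, (1 - p i) := by
  rw [mul_sum, ← sum_neg_distrib, exp_sum]
  exact prod_le_prod (fun i _ => (exp_pos _).le)
    fun i hi => exp_neg_two_mul_le_one_sub (hp i hi)

theorem low_contention_constant_failure_general (lam n : ℕ) (p : ℕ → ℝ)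
    (hp : ∀ i ∈ Finset.range lam, p i ∈ Set.Icc (0 : ℝ) (1 / 2))
    (hTC : (n : ℝ) * ∑ i ∈ Finset.range lam, p i < 2) :
    Real.exp (-4) ≤ (∏ i ∈ Finset.range lam, (1 - p i)) ^ n := by
  calc exp (-4) ≤ exp (n * -(2 * ∑ i ∈ range lam, p i)) := exp_le_exp.2 (by linarith)
    _ = exp (-(2 * ∑ i ∈ range lam, p i)) ^ n := exp_nat_mul _ n
    _ ≤ (∏ i ∈ range lam, (1 - p i)) ^ n :=
      pow_le_pow_left₀ (exp_pos _).le (exp_neg_two_mul_sum_le_prod_one_sub hp) n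

/-- A fair algorithm with total contention `TC = n · ∑ p(i) < 2` fails with
constant probability: the probability that every one of the `n` packets fails in
every slot, which is at least `(∏ (1 - p i))^n`, is at least `e^{-4}`. -/
theorem low_contention_constant_failure (lam n : ℕ) (p : ℕ → ℝ) (hn : 1 ≤ n)
    (hp : ∀ i ∈ Finset.range lam, p i ∈ Set.Icc (0 : ℝ) (1 / 2))
    (hTC : (n : ℝ) * ∑ i ∈ Finset.range lam, p i < 2) :
    Real.exp (-4) ≤ (∏ i ∈ Finset.range lam, (1 - p i)) ^ n :=
  low_contention_constant_failure_general lam n p hp hTC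
end

section
/- Fix a slot in which each active packet sends independently with probability at most 1/2, and let Con denote the sum of the sending probabilities. Then the probability that exactly one packet sends is at least Con/e^{2·Con}. -/
/-!
Each factor satisfies `1 - pⱼ ≥ e^{-2pⱼ}` on `[0, 1/2]`, so `∏ⱼ (1 - pⱼ) ≥ e^{-2·Con}`.
Dropping the factor `1 - pᵢ ≤ 1` from the full product only increases it, hence the
success probability `∑ᵢ pᵢ ∏_{j≠i} (1 - pⱼ)` is at least `Con · ∏ⱼ (1 - pⱼ) ≥ Con · e^{-2·Con}`.
-/

open Finset

namespace Real

-- `e^{2x} ≥ 1 + 2x`, and `(1 - x)(1 + 2x) = 1 + x(1 - 2x) ≥ 1` on `[0, 1/2]`.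
lemma exp_neg_two_mul_le_one_sub_s11 {x : ℝ} (hx₀ : 0 ≤ x) (hx : x ≤ 1 / 2) :
    exp (-(2 * x)) ≤ 1 - x := by
  have hpos : 0 < 1 + 2 * x := by linarith
  calc exp (-(2 * x)) = (exp (2 * x))⁻¹ := exp_neg _
    _ ≤ (1 + 2 * x)⁻¹ := inv_anti₀ hpos (by linarith [add_one_le_exp (2 * x)])
    _ ≤ 1 - x := by rw [inv_le_iff_one_le_mul₀ hpos]; nlinarith

lemma exp_neg_two_mul_sum_le_prod_one_sub_s11 {ι : Type*} (s : Finset ι) {p : ι → ℝ}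
    (hp₀ : ∀ i ∈ s, 0 ≤ p i) (hp : ∀ i ∈ s, p i ≤ 1 / 2) :
    exp (-(2 * ∑ i ∈ s, p i)) ≤ ∏ i ∈ s, (1 - p i) := by
  rw [mul_sum, ← sum_neg_distrib, exp_sum]
  exact prod_le_prod (fun i _ => (exp_pos _).le)
    fun i hi => exp_neg_two_mul_le_one_sub_s11 (hp₀ i hi) (hp i hi)

end Real

lemma sum_mul_prod_one_sub_le_sum_mul_prod_erase {ι : Type*} [DecidableEq ι] (s : Finset ι)
    {p : ι → ℝ} (hp₀ : ∀ i ∈ s, 0 ≤ p i) (hp : ∀ i ∈ s, p i ≤ 1) :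
    (∑ i ∈ s, p i) * ∏ j ∈ s, (1 - p j) ≤ ∑ i ∈ s, p i * ∏ j ∈ s.erase i, (1 - p j) := by
  rw [sum_mul]
  refine sum_le_sum fun i hi => mul_le_mul_of_nonneg_left ?_ (hp₀ i hi)
  rw [← mul_prod_erase s _ hi]
  have hrest : 0 ≤ ∏ j ∈ s.erase i, (1 - p j) :=
    prod_nonneg fun j hj => sub_nonneg.2 (hp j (mem_of_mem_erase hj))
  exact mul_le_of_le_one_left hrest (by linarith [hp₀ i hi])

/-- Bender et al.: if each of `n` packets sends independently with probability
`pᵢ ∈ [0, 1/2]` and `Con = ∑ pᵢ`, then the probability of exactly one sender,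
`∑ᵢ pᵢ ∏_{j≠i}(1-pⱼ)`, is at least `Con / e^{2·Con}`. -/
theorem success_prob_lower_bound (n : ℕ) (p : Fin n → ℝ)
    (hp : ∀ i, p i ∈ Set.Icc (0 : ℝ) (1 / 2)) :
    (∑ i, p i) / Real.exp (2 * ∑ i, p i) ≤
      ∑ i, p i * ∏ j ∈ Finset.univ.erase i, (1 - p j) := by
  have hp₀ : ∀ i ∈ univ, 0 ≤ p i := fun i _ => (hp i).1
  have hp_half : ∀ i ∈ univ, p i ≤ 1 / 2 := fun i _ => (hp i).2
  calc (∑ i, p i) / Real.exp (2 * ∑ i, p i)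
      = (∑ i, p i) * Real.exp (-(2 * ∑ i, p i)) := by rw [Real.exp_neg, div_eq_mul_inv]
    _ ≤ (∑ i, p i) * ∏ j, (1 - p j) :=
        mul_le_mul_of_nonneg_left (Real.exp_neg_two_mul_sum_le_prod_one_sub_s11 univ hp₀ hp_half)
          (sum_nonneg hp₀)
    _ ≤ ∑ i, p i * ∏ j ∈ univ.erase i, (1 - p j) :=
        sum_mul_prod_one_sub_le_sum_mul_prod_erase univ hp₀ fun i hi => by
          linarith [hp_half i hi]
end
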